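/- Let (𝒱, ρ, U) be a complex gradient system on a complex manifold M̃. Then the distribution 𝒟^ℝ_ρ ⊂ TM̃ generated by the vector fields ρ(V), V ∈ 𝒱, is integrable (equivalently, involutive: the Lie bracket of any two sections of 𝒟^ℝ_ρ is again a section of 𝒟^ℝ_ρ). -/

import Mathlib

open Set VectorField

noncomputable section

/-- The complex structure `J` (multiplication by `Complex.I`) on the tangent spaces of a
complex vector space, as an `ℝ`-linear map. -/
def Jmap (E : Type*) [NormedAddCommGroup E] [NormedSpace ℂ E] : E →ₗ[ℝ] E where
  toFun v := Complex.I • v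
  map_add' u v := smul_add Complex.I u v
  map_smul' r v := smul_comm Complex.I r v

variable {E : Type*} [NormedAddCommGroup E] [NormedSpace ℂ E]
  {𝒱 : Type*} [NormedAddCommGroup 𝒱] [NormedSpace ℝ 𝒱]

/-- The distribution `𝒟^ℝ_ρ` generated by the vector fields `ρ V`, `V ∈ 𝒱`. -/
def DRdistr (ρ : 𝒱 →ₗ[ℝ] (E → E)) (x : E) : Submodule ℝ E :=
  Submodule.span ℝ (Set.range fun V => ρ V x)

/-- The distribution `𝒟^ℂ_ρ` generated by the vector fields `ρ V` and `J (ρ V)`, `V ∈ 𝒱`. -/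
def DCdistr (ρ : 𝒱 →ₗ[ℝ] (E → E)) (x : E) : Submodule ℝ E :=
  Submodule.span ℝ ((Set.range fun V => ρ V x) ∪ (Set.range fun V => Complex.I • ρ V x))

/-- A complex gradient system on the open set `Ω` of the complex vector space `E`:
an `ℝ`-linear map `ρ` from `𝒱` to smooth vector fields and a smooth map `U : Ω → 𝒱`
with `dU(ρ V) = 0`, `d^cU(ρ V) = V` (where `d^cU(X) = -dU(JX)`), and such that the
distribution `𝒟^ℂ_ρ` is integrable (equivalently, involutive). -/
structure IsComplexGradientSystem (Ω : Set E) (ρ : 𝒱 →ₗ[ℝ] (E → E)) (U : E → 𝒱) : Prop where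
  isOpen : IsOpen Ω
  smooth_vectorField : ∀ V : 𝒱, ContDiffOn ℝ (⊤ : ℕ∞) (ρ V) Ω
  smooth_gradientMap : ContDiffOn ℝ (⊤ : ℕ∞) U Ω
  dU_rho : ∀ V : 𝒱, ∀ x ∈ Ω, fderivWithin ℝ U Ω x (ρ V x) = 0
  dcU_rho : ∀ V : 𝒱, ∀ x ∈ Ω, -fderivWithin ℝ U Ω x (Complex.I • ρ V x) = V
  integrable : ∀ X Y : E → E, ContDiffOn ℝ (⊤ : ℕ∞) X Ω → ContDiffOn ℝ (⊤ : ℕ∞) Y Ω →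
    (∀ x ∈ Ω, X x ∈ DCdistr ρ x) → (∀ x ∈ Ω, Y x ∈ DCdistr ρ x) →
    ∀ x ∈ Ω, lieBracketWithin ℝ X Y Ω x ∈ DCdistr ρ x


section Aux

variable {E : Type*} [NormedAddCommGroup E] [NormedSpace ℂ E]
  {𝒱 : Type*} [NormedAddCommGroup 𝒱] [NormedSpace ℝ 𝒱]

/-- Evaluation of `ρ` at a point, as a linear map `𝒱 →ₗ[ℝ] E`. -/
def rhoEval (ρ : 𝒱 →ₗ[ℝ] (E → E)) (x : E) : 𝒱 →ₗ[ℝ] E where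
  toFun V := ρ V x
  map_add' V W := congrFun (map_add ρ V W) x
  map_smul' r V := congrFun (map_smul ρ r V) x

lemma DRdistr_eq_range (ρ : 𝒱 →ₗ[ℝ] (E → E)) (x : E) :
    DRdistr ρ x = LinearMap.range (rhoEval ρ x) := by
  have h1 : (Set.range fun V => ρ V x) = ↑(LinearMap.range (rhoEval ρ x)) := rfl
  rw [DRdistr, h1, Submodule.span_eq]

lemma mem_DRdistr_iff {ρ : 𝒱 →ₗ[ℝ] (E → E)} {x : E} {z : E} :
    z ∈ DRdistr ρ x ↔ ∃ V, ρ V x = z := by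
  rw [DRdistr_eq_range]
  exact LinearMap.mem_range

lemma mem_DCdistr_iff {ρ : 𝒱 →ₗ[ℝ] (E → E)} {x : E} {z : E} :
    z ∈ DCdistr ρ x ↔ ∃ V W, ρ V x + Complex.I • ρ W x = z := by
  have h1 : (Set.range fun V => ρ V x) = ↑(LinearMap.range (rhoEval ρ x)) := rfl
  have h2 : (Set.range fun V => Complex.I • ρ V x)
      = ↑(LinearMap.range ((Jmap E).comp (rhoEval ρ x))) := rfl
  rw [DCdistr, h1, h2, Submodule.span_union, Submodule.span_eq, Submodule.span_eq,
    Submodule.mem_sup]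
  constructor
  · rintro ⟨a, ⟨V, rfl⟩, b, ⟨W, rfl⟩, rfl⟩
    exact ⟨V, W, rfl⟩
  · rintro ⟨V, W, rfl⟩
    exact ⟨ρ V x, ⟨V, rfl⟩, Complex.I • ρ W x, ⟨W, rfl⟩, rfl⟩

/-- If `z` lies in `𝒟^ℂ_ρ` and `dU(z) = 0`, then `z` lies in `𝒟^ℝ_ρ`. -/
lemma mem_DRdistr_of_mem_DCdistr {Ω : Set E} {ρ : 𝒱 →ₗ[ℝ] (E → E)} {U : E → 𝒱}
    (h : IsComplexGradientSystem Ω ρ U) {x : E} (hx : x ∈ Ω) {z : E}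
    (hz : z ∈ DCdistr ρ x) (hdU : fderivWithin ℝ U Ω x z = 0) :
    z ∈ DRdistr ρ x := by
  obtain ⟨V, W, rfl⟩ := mem_DCdistr_iff.1 hz
  have hW : W = 0 := by
    have := h.dcU_rho W x hx
    rw [← this]
    have : fderivWithin ℝ U Ω x (ρ V x + Complex.I • ρ W x)
        = fderivWithin ℝ U Ω x (ρ V x) + fderivWithin ℝ U Ω x (Complex.I • ρ W x) :=
      map_add _ _ _
    rw [hdU, h.dU_rho V x hx, zero_add] at this
    rw [← this, neg_zero]
  subst hW
  rw [map_zero]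
  simp only [Pi.zero_apply, smul_zero, add_zero]
  exact mem_DRdistr_iff.2 ⟨V, rfl⟩

end Aux

/-- For a complex gradient system `(𝒱, ρ, U)`, the distribution
`𝒟^ℝ_ρ` generated by the vector fields `ρ V`, `V ∈ 𝒱`, is integrable (equivalently,
involutive: the Lie bracket of any two smooth sections of `𝒟^ℝ_ρ` is again a section
of `𝒟^ℝ_ρ`). -/
theorem DRdistr_integrable
    {Ω : Set E} {ρ : 𝒱 →ₗ[ℝ] (E → E)} {U : E → 𝒱}
    (h : IsComplexGradientSystem Ω ρ U) :
    ∀ X Y : E → E, ContDiffOn ℝ (⊤ : ℕ∞) X Ω → ContDiffOn ℝ (⊤ : ℕ∞) Y Ω →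
      (∀ x ∈ Ω, X x ∈ DRdistr ρ x) → (∀ x ∈ Ω, Y x ∈ DRdistr ρ x) →
      ∀ x ∈ Ω, lieBracketWithin ℝ X Y Ω x ∈ DRdistr ρ x := by
  intro X Y hX hY hXD hYD x hx
  have hΩ := h.isOpen
  have hu : UniqueDiffOn ℝ Ω := hΩ.uniqueDiffOn
  -- `𝒟^ℝ ⊆ 𝒟^ℂ`
  have hsub : ∀ y, DRdistr ρ y ≤ DCdistr ρ y := by
    intro y
    exact Submodule.span_mono Set.subset_union_left
  have hC : lieBracketWithin ℝ X Y Ω x ∈ DCdistr ρ x :=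
    h.integrable X Y hX hY (fun y hy => hsub y (hXD y hy)) (fun y hy => hsub y (hYD y hy)) x hx
  apply mem_DRdistr_of_mem_DCdistr h hx hC
  -- now show `dU([X,Y]) = 0`
  set f := fderivWithin ℝ U Ω with hf
  have hUdiff : ∀ y ∈ Ω, DifferentiableWithinAt ℝ U Ω y := fun y hy =>
    (h.smooth_gradientMap y hy).differentiableWithinAt (by norm_num)
  have hfC : ContDiffOn ℝ (⊤ : ℕ∞) f Ω := h.smooth_gradientMap.fderivWithin hu (by norm_num)
  have hfd : DifferentiableWithinAt ℝ f Ω x :=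
    (hfC x hx).differentiableWithinAt (by norm_num)
  have hXd : DifferentiableWithinAt ℝ X Ω x := (hX x hx).differentiableWithinAt (by norm_num)
  have hYd : DifferentiableWithinAt ℝ Y Ω x := (hY x hx).differentiableWithinAt (by norm_num)
  -- `dU(Z) = 0` on `Ω` for a section `Z` of `𝒟^ℝ`
  have zero_on : ∀ Z : E → E, (∀ y ∈ Ω, Z y ∈ DRdistr ρ y) → ∀ y ∈ Ω, f y (Z y) = 0 := by
    intro Z hZ y hy
    obtain ⟨V, hV⟩ := mem_DRdistr_iff.1 (hZ y hy)
    rw [← hV]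
    exact h.dU_rho V y hy
  have deriv_zero : ∀ Z : E → E, (∀ y ∈ Ω, Z y ∈ DRdistr ρ y) →
      DifferentiableWithinAt ℝ Z Ω x →
      (f x).comp (fderivWithin ℝ Z Ω x) + (fderivWithin ℝ f Ω x).flip (Z x) = 0 := by
    intro Z hZ hZd
    have h1 : fderivWithin ℝ (fun y => f y (Z y)) Ω x
        = (f x).comp (fderivWithin ℝ Z Ω x) + (fderivWithin ℝ f Ω x).flip (Z x) :=
      fderivWithin_clm_apply (hu x hx) hfd hZd
    rw [← h1]
    have h2 : fderivWithin ℝ (fun y => f y (Z y)) Ω x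
        = fderivWithin ℝ (fun _ => (0 : 𝒱)) Ω x :=
      fderivWithin_congr (zero_on Z hZ) (zero_on Z hZ x hx)
    rw [h2, fderivWithin_const_apply _]
  have hsymm : IsSymmSndFDerivWithinAt ℝ U Ω x := by
    refine (h.smooth_gradientMap x hx).isSymmSndFDerivWithinAt (by simp only [minSmoothness_of_isRCLikeNormedField]; exact WithTop.coe_le_coe.mpr (le_top : (2 : ℕ∞) ≤ ⊤)) hu ?_ hx
    rw [hΩ.interior_eq]
    exact subset_closure hx
  have hXeq := deriv_zero X hXD hXd
  have hYeq := deriv_zero Y hYD hYd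
  have hXeq' := congrFun (congrArg DFunLike.coe hXeq) (Y x)
  have hYeq' := congrFun (congrArg DFunLike.coe hYeq) (X x)
  simp only [ContinuousLinearMap.add_apply, ContinuousLinearMap.comp_apply,
    ContinuousLinearMap.flip_apply, ContinuousLinearMap.zero_apply] at hXeq' hYeq'
  have hsw : fderivWithin ℝ f Ω x (Y x) (X x) = fderivWithin ℝ f Ω x (X x) (Y x) :=
    hsymm (Y x) (X x)
  rw [lieBracketWithin, map_sub]
  rw [hsw] at hXeq'
  linear_combination (norm := abel) hYeq' - hXeq'
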